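/- Let B be a locally finite groupoid and let p : E ⥤ B be a functor of groupoids. Then E is a finite groupoid if and only if every homotopy fibre E_b = (b ↓ p) is a finite groupoid and E_b is nonempty for only finitely many isomorphism classes [b] of objects of B. In that case |E| = Σ_{[b]∈π₀B} |E_b| / #Aut(b), the sum ranging over the isomorphism classes of objects of B. -/

import Mathlib

open CategoryTheory

/-- Isomorphism classes of objects of a category. -/
abbrev IsoCls (C : Type*) [Category C] := Quotient (CategoryTheory.isIsomorphicSetoid C)

/-- A category is locally finite if all of its hom-sets are finite. -/
def LocallyFiniteCat (C : Type*) [Category C] : Prop := ∀ x y : C, Finite (x ⟶ y)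

/-- A category is finite (as a homotopy type) if all hom-sets are finite and it has
finitely many isomorphism classes of objects. -/
def FiniteCat (C : Type*) [Category C] : Prop :=
  (∀ x y : C, Finite (x ⟶ y)) ∧ Finite (IsoCls C)

/-- Homotopy cardinality: the sum over isomorphism classes of the reciprocal of the
order of the automorphism group. -/
noncomputable def gcard (C : Type*) [Category C] : ℚ :=
  ∑ᶠ X : IsoCls C, (Nat.card (Aut X.out) : ℚ)⁻¹

/-! Both finiteness conditions transfer along `p` and its comma categories because `B` is
locally finite. For the cardinality formula, the isomorphism classes of `(b ↓ p)` lying over the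
class of `e` are the orbits of `Aut e` on `b ⟶ p e`, with the stabilisers as automorphism groups,
so the orbit-counting formula gives `|E_b| = Σ_[e] #(b ⟶ p e) / #Aut e`. Dividing by `#Aut b` and
summing over `[b]`, only `b ≅ p e` contributes, with `#(b ⟶ p e) = #Aut b`; what is left is
`Σ_[e] 1 / #Aut e = |E|`. -/

namespace MulAction

theorem finsum_inv_card_stabilizer (G X : Type*) [Group G] [MulAction G X] [Finite G]
    [Finite X] :
    ∑ᶠ ω : orbitRel.Quotient G X, (Nat.card (stabilizer G ω.out) : ℚ)⁻¹ =
      Nat.card X / Nat.card G := by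
  have := Fintype.ofFinite (orbitRel.Quotient G X)
  have hX : Nat.card X = ∑ ω : orbitRel.Quotient G X, Nat.card (G ⧸ stabilizer G ω.out) := by
    rw [Nat.card_congr (selfEquivSigmaOrbitsQuotientStabilizer G X), Nat.card_sigma]
  have hG : (Nat.card G : ℚ) ≠ 0 := by exact_mod_cast Nat.card_pos.ne'
  rw [finsum_eq_sum_of_fintype, eq_div_iff hG, hX, Nat.cast_sum, Finset.sum_mul]
  refine Finset.sum_congr rfl fun ω _ => ?_
  have hS : (Nat.card (stabilizer G ω.out) : ℚ) ≠ 0 := by exact_mod_cast Nat.card_pos.ne'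
  rw [(stabilizer G ω.out).card_eq_card_quotient_mul_card_subgroup, Nat.cast_mul]
  field_simp

end MulAction

attribute [local instance] isIsomorphicSetoid

namespace IsoCls

variable {C D : Type*} [Category C] [Category D]

def map (F : C ⥤ D) : IsoCls C → IsoCls D :=
  Quotient.map F.obj fun _ _ ⟨i⟩ => ⟨F.mapIso i⟩

lemma card_aut_out_mk (X : C) : Nat.card (Aut (⟦X⟧ : IsoCls C).out) = Nat.card (Aut X) :=
  Nat.card_congr (Aut.autMulEquivOfIso (Classical.choice (Quotient.mk_out X))).toEquiv

end IsoCls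

namespace CategoryTheory.StructuredArrow

open MulAction

variable {C D : Type*} [Category C] [Category D] {b : D} {p : C ⥤ D}

lemma finite_hom (x y : StructuredArrow b p) [Finite (x.right ⟶ y.right)] : Finite (x ⟶ y) :=
  Finite.of_injective (fun f => f.right) fun f g => hom_ext f g

/-- The action `g • φ = φ ≫ p.map g.hom`. -/
abbrev autMulAction (b : D) (p : C ⥤ D) (e : C) : MulAction (Aut e) (b ⟶ p.obj e) :=
  MulAction.compHom _ ((Aut.toEnd (p.obj e)).comp (p.mapAut e))

attribute [local instance] autMulAction

lemma nonempty_mk_iso_mk_iff {e : C} {φ ψ : b ⟶ p.obj e} :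
    Nonempty (mk φ ≅ mk ψ) ↔ ψ ∈ orbit (Aut e) φ := by
  constructor
  · rintro ⟨i⟩
    exact ⟨(proj b p).mapIso i, w i.hom⟩
  · rintro ⟨g, rfl⟩
    exact ⟨isoMk g⟩

lemma card_aut_mk {e : C} (φ : b ⟶ p.obj e) :
    Nat.card (Aut (mk φ)) = Nat.card (stabilizer (Aut e) φ) :=
  Nat.card_congr
    { toFun := fun i => ⟨(proj b p).mapIso i, w i.hom⟩
      invFun := fun g => isoMk g.1 g.2
      left_inv := fun i => by ext; rfl
      right_inv := fun g => by ext; rfl }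

noncomputable def orbitsEquivIsoClsOver (b : D) (p : C ⥤ D) (e : C) :
    orbitRel.Quotient (Aut e) (b ⟶ p.obj e) ≃
      {x : IsoCls (StructuredArrow b p) // x.map (proj b p) = ⟦e⟧} := by
  refine Equiv.ofBijective (fun ω => ⟨⟦mk ω.out⟧, rfl⟩) ⟨fun ω₁ ω₂ h => ?_, fun ⟨x, hx⟩ => ?_⟩
  · have h' : Nonempty (mk ω₂.out ≅ mk ω₁.out) := Quotient.exact (congrArg Subtype.val h).symm
    exact Quotient.out_equiv_out.mp (nonempty_mk_iso_mk_iff.mp h')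
  · induction x using Quotient.ind with | _ y =>
    obtain ⟨i⟩ : Nonempty (y.right ≅ e) := Quotient.exact hx
    let φ : b ⟶ p.obj e := y.hom ≫ p.map i.hom
    have hφ : Nonempty (mk φ ≅ mk (⟦φ⟧ : orbitRel.Quotient (Aut e) _).out) :=
      nonempty_mk_iso_mk_iff.mpr (Quotient.mk_out (s := orbitRel (Aut e) _) φ)
    exact ⟨⟦φ⟧, Subtype.ext (_root_.Quotient.sound ⟨hφ.some.symm ≪≫ (isoMk i).symm⟩)⟩

theorem finsum_inv_card_aut_isoClsOver {e : C} [Finite (Aut e)] [Finite (b ⟶ p.obj e)] :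
    ∑ᶠ x : {x : IsoCls (StructuredArrow b p) // x.map (proj b p) = ⟦e⟧},
        (Nat.card (Aut x.1.out) : ℚ)⁻¹ =
      Nat.card (b ⟶ p.obj e) / Nat.card (Aut e) := by
  rw [← finsum_comp_equiv (orbitsEquivIsoClsOver b p e), ← finsum_inv_card_stabilizer]
  refine finsum_congr fun ω => ?_
  change (Nat.card (Aut (⟦mk ω.out⟧ : IsoCls (StructuredArrow b p)).out) : ℚ)⁻¹ = _
  rw [IsoCls.card_aut_out_mk, card_aut_mk]

end CategoryTheory.StructuredArrow

namespace CategoryTheory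

open StructuredArrow

section Finiteness

variable {E B : Type*} [Category E] [Category B] (p : E ⥤ B)

lemma finite_isoCls_structuredArrow [Finite (IsoCls E)] (b : B) [∀ e, Finite (b ⟶ p.obj e)] :
    Finite (IsoCls (StructuredArrow b p)) := by
  refine Finite.of_surjective (fun z : Σ c : IsoCls E, (b ⟶ p.obj c.out) => ⟦mk z.2⟧) ?_
  intro x
  induction x using Quotient.ind with | _ y =>
  obtain ⟨i⟩ := Quotient.mk_out (s := isIsomorphicSetoid E) y.right
  exact ⟨⟨⟦y.right⟧, y.hom ≫ p.map i.inv⟩, _root_.Quotient.sound ⟨StructuredArrow.isoMk i⟩⟩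

lemma finite_isoCls_of_finite_isoCls_structuredArrow
    [∀ b : B, Finite (IsoCls (StructuredArrow b p))]
    (hsupp : {b : IsoCls B | Nonempty (StructuredArrow b.out p)}.Finite) :
    Finite (IsoCls E) := by
  have := hsupp.to_subtype
  refine Finite.of_surjective
    (fun z : Σ b : {b : IsoCls B | Nonempty (StructuredArrow b.out p)},
      IsoCls (StructuredArrow b.1.out p) => z.2.map (proj _ p)) ?_
  intro c
  induction c using Quotient.ind with | _ e =>
  obtain ⟨i⟩ := Quotient.mk_out (s := isIsomorphicSetoid B) (p.obj e)
  exact ⟨⟨⟨⟦p.obj e⟧, ⟨mk i.hom⟩⟩, ⟦mk i.hom⟧⟩, rfl⟩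

lemma finite_hom_of_finite_hom_structuredArrow (e e' : E) [Finite (p.obj e ⟶ p.obj e')]
    (h : ∀ x y : StructuredArrow (p.obj e) p, Finite (x ⟶ y)) : Finite (e ⟶ e') := by
  have (β : p.obj e ⟶ p.obj e') : Finite {ψ : e ⟶ e' // p.map ψ = β} :=
    have := h (mk (𝟙 (p.obj e))) (mk β)
    Finite.of_injective
      (fun ψ : {ψ : e ⟶ e' // p.map ψ = β} => (homMk ψ.1 (by simp [ψ.2]) : mk (𝟙 _) ⟶ mk β))
      fun ψ ψ' hψ => Subtype.ext (congrArg CommaMorphism.right hψ)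
  exact Finite.of_equiv _ (Equiv.sigmaFiberEquiv p.map)

end Finiteness

lemma finite_setOf_nonempty_structuredArrow {E B : Type*} [Category E] [Groupoid B]
    (p : E ⥤ B) [Finite (IsoCls E)] :
    {b : IsoCls B | Nonempty (StructuredArrow b.out p)}.Finite := by
  refine (Set.finite_range (IsoCls.map p)).subset fun b ⟨y⟩ => ⟨⟦y.right⟧, ?_⟩
  exact (_root_.Quotient.sound (s := isIsomorphicSetoid B) ⟨(asIso y.hom).symm⟩).trans b.out_eq

theorem gcard_structuredArrow {E B : Type*} [Category E] [Category B] (p : E ⥤ B)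
    [Finite (IsoCls E)] [∀ e : E, Finite (Aut e)] (b : B) [∀ e, Finite (b ⟶ p.obj e)] :
    gcard (StructuredArrow b p) =
      ∑ᶠ c : IsoCls E, (Nat.card (b ⟶ p.obj c.out) : ℚ) / Nat.card (Aut c.out) := by
  classical
  have := finite_isoCls_structuredArrow p b
  have := Fintype.ofFinite (IsoCls E)
  have := Fintype.ofFinite (IsoCls (StructuredArrow b p))
  rw [gcard, finsum_eq_sum_of_fintype, finsum_eq_sum_of_fintype,
    ← Fintype.sum_fiberwise (IsoCls.map (proj b p))]
  refine Finset.sum_congr rfl fun c _ => ?_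
  have h := finsum_inv_card_aut_isoClsOver (b := b) (p := p) (e := c.out)
  rwa [Quotient.out_eq, finsum_eq_sum_of_fintype] at h

section Groupoid

variable {B : Type*} [Groupoid B]

lemma card_out_hom_eq_zero {b : IsoCls B} {Y : B} (h : b ≠ ⟦Y⟧) : Nat.card (b.out ⟶ Y) = 0 :=
  Nat.card_eq_zero.mpr <| .inl ⟨fun f =>
    h (b.out_eq.symm.trans (_root_.Quotient.sound (s := isIsomorphicSetoid B) ⟨asIso f⟩))⟩

lemma finsum_card_out_hom_div_card_aut (Y : B) [Finite (Y ⟶ Y)] :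
    ∑ᶠ b : IsoCls B, (Nat.card (b.out ⟶ Y) : ℚ) / Nat.card (Aut b.out) = 1 := by
  rw [finsum_eq_single _ ⟦Y⟧ fun b hb => by simp [card_out_hom_eq_zero hb]]
  obtain ⟨i⟩ := Quotient.mk_out (s := isIsomorphicSetoid B) Y
  have hY : (Nat.card (Y ⟶ Y) : ℚ) ≠ 0 := by
    have : Nonempty (Y ⟶ Y) := ⟨𝟙 Y⟩
    exact_mod_cast Nat.card_pos.ne'
  rw [IsoCls.card_aut_out_mk, Nat.card_congr (i.homCongr (Iso.refl Y)),
    (Nat.card_congr (Groupoid.isoEquivHom Y Y) : Nat.card (Aut Y) = _), div_self hY]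

end Groupoid

theorem gcard_eq_finsum_gcard_structuredArrow_div {E B : Type*} [Groupoid E] [Groupoid B]
    (p : E ⥤ B) (hB : LocallyFiniteCat B) (hE : FiniteCat E) :
    gcard E = ∑ᶠ b : IsoCls B, gcard (StructuredArrow b.out p) / Nat.card (Aut b.out) := by
  obtain ⟨hEhom, hEcls⟩ := hE
  have := Fintype.ofFinite (IsoCls E)
  have (e : E) : Finite (Aut e) := Finite.of_equiv _ (Groupoid.isoEquivHom e e).symm
  have (b : B) (e : E) : Finite (b ⟶ p.obj e) := hB _ _
  have (Y : B) : Finite (Y ⟶ Y) := hB _ _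
  let f (b : IsoCls B) (c : IsoCls E) : ℚ :=
    Nat.card (b.out ⟶ p.obj c.out) / Nat.card (Aut b.out) * (Nat.card (Aut c.out) : ℚ)⁻¹
  have hf (c : IsoCls E) : (fun b => f b c).HasFiniteSupport :=
    (Set.finite_singleton ⟦p.obj c.out⟧).subset fun b hb => by
      by_contra h
      exact hb (by simp [f, card_out_hom_eq_zero h])
  calc gcard E = ∑ c : IsoCls E, (Nat.card (Aut c.out) : ℚ)⁻¹ := finsum_eq_sum_of_fintype _
    _ = ∑ c, ∑ᶠ b, f b c := Finset.sum_congr rfl fun c _ => by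
      rw [← finsum_mul, finsum_card_out_hom_div_card_aut, one_mul]
    _ = ∑ᶠ b, ∑ c, f b c := (finsum_sum_comm _ f fun c _ => hf c).symm
    _ = _ := finsum_congr fun b => by
      rw [gcard_structuredArrow, finsum_eq_sum_of_fintype, Finset.sum_div]
      exact Finset.sum_congr rfl fun c _ => by simp only [f]; ring

end CategoryTheory

/-- For `B` locally finite and `p : E ⥤ B`: `E` is finite iff every homotopy fibre
`(b ↓ p)` is finite and only finitely many iso classes of `B` carry a nonempty fibre;
and in that case `|E| = Σ_{[b]} |E_b| / #Aut(b)`. -/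
theorem finite_iff_fibrewise_finite {E B : Type*} [Groupoid E] [Groupoid B]
    (hB : LocallyFiniteCat B) (p : E ⥤ B) :
    (FiniteCat E ↔
      ((∀ b : B, FiniteCat (StructuredArrow b p)) ∧
        {b : IsoCls B | Nonempty (StructuredArrow b.out p)}.Finite)) ∧
    (FiniteCat E →
      gcard E =
        ∑ᶠ b : IsoCls B, gcard (StructuredArrow b.out p) / (Nat.card (Aut b.out) : ℚ)) := by
  have (b : B) (e : E) : Finite (b ⟶ p.obj e) := hB _ _
  refine ⟨⟨fun ⟨hEhom, hEcls⟩ => ⟨fun b => ⟨fun x y => ?_, ?_⟩, ?_⟩,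
    fun ⟨hfib, hsupp⟩ => ⟨?_, ?_⟩⟩, gcard_eq_finsum_gcard_structuredArrow_div p hB⟩
  · exact StructuredArrow.finite_hom x y
  · exact finite_isoCls_structuredArrow p b
  · exact finite_setOf_nonempty_structuredArrow p
  · exact fun e e' => finite_hom_of_finite_hom_structuredArrow p e e' (hfib (p.obj e)).1
  · have (b : B) := (hfib b).2
    exact finite_isoCls_of_finite_isoCls_structuredArrow p hsupp
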